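/- arXiv:0802.1604 — 2 statements merged into one kernel-verified Lean document; each statement's English description precedes it below -/
import Mathlib

section
/- Let A be a symmetric action-graph game with n players on a finite strategy set S, in which every strategy's in-neighborhood has size at most d and all utility values lie in [0,1]. Let p and q be probability distributions on S with |p(s) − q(s)| ≤ δ for every s ∈ S. Then for every strategy s ∈ S, the expected utilities satisfy |U(s, p) − U(s, q)| ≤ δ·d·n. -/
lemma sum_pi_succ {S : Type} [Fintype S] (m : ℕ) (g : (Fin (m+1) → S) → ℝ) :
    ∑ c : Fin (m+1) → S, g c = ∑ x : S, ∑ c' : Fin m → S, g (Fin.cons x c') := by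
  rw [← Fintype.sum_equiv (Fin.consEquiv fun _ => S) (fun xc => g (Fin.cons xc.1 xc.2)) g (fun _ => rfl), Fintype.sum_prod_type]

lemma sum_prod_pi {S : Type} [Fintype S] (f : S → ℝ) (hf : ∑ x, f x = 1) :
    ∀ m : ℕ, ∑ c : Fin m → S, ∏ i, f (c i) = 1 := by
  intro m
  induction m with
  | zero => simp
  | succ m ih =>
    rw [sum_pi_succ]
    simp only [Fin.prod_univ_succ, Fin.cons_zero, Fin.cons_succ]
    rw [← hf]
    exact Finset.sum_congr rfl fun x _ => by rw [← Finset.mul_sum, ih]; ring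

lemma key {S : Type} [Fintype S] [DecidableEq S]
    (d : ℕ) (T : Finset S) (δ : ℝ) (hδ : 0 ≤ δ) (hT : T.card ≤ d)
    (p q : S → ℝ)
    (hp0 : ∀ s, 0 ≤ p s) (hp1 : ∑ s, p s = 1)
    (hq0 : ∀ s, 0 ≤ q s) (hq1 : ∑ s, q s = 1)
    (hpq : ∀ s, |p s - q s| ≤ δ) :
    ∀ (m : ℕ) (F : (Fin m → S) → ℝ),
      (∀ c, F c ∈ Set.Icc (0:ℝ) 1) →
      (∀ (c : Fin m → S) (k : Fin m) (x x' : S), x ∉ T → x' ∉ T →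
        F (Function.update c k x) = F (Function.update c k x')) →
      |(∑ c : Fin m → S, (∏ i, p (c i)) * F c) - ∑ c : Fin m → S, (∏ i, q (c i)) * F c|
        ≤ δ * d * m := by
  intro m
  induction m with
  | zero => intro F _ _; simp
  | succ m ih =>
    intro F hF hFloc
    set A : S → ℝ := fun x => ∑ c' : Fin m → S, (∏ i, p (c' i)) * F (Fin.cons x c') with hA
    set B : S → ℝ := fun x => ∑ c' : Fin m → S, (∏ i, q (c' i)) * F (Fin.cons x c') with hB
    have hsplitp : (∑ c : Fin (m+1) → S, (∏ i, p (c i)) * F c) = ∑ x, p x * A x := by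
      rw [sum_pi_succ]
      refine Finset.sum_congr rfl fun x _ => ?_
      simp only [hA, Fin.prod_univ_succ, Fin.cons_zero, Fin.cons_succ, Finset.mul_sum]
      exact Finset.sum_congr rfl fun c' _ => by ring
    have hsplitq : (∑ c : Fin (m+1) → S, (∏ i, q (c i)) * F c) = ∑ x, q x * B x := by
      rw [sum_pi_succ]
      refine Finset.sum_congr rfl fun x _ => ?_
      simp only [hB, Fin.prod_univ_succ, Fin.cons_zero, Fin.cons_succ, Finset.mul_sum]
      exact Finset.sum_congr rfl fun c' _ => by ring
    -- properties of A
    have hA01 : ∀ x, A x ∈ Set.Icc (0:ℝ) 1 := by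
      intro x
      constructor
      · exact Finset.sum_nonneg fun c' _ => mul_nonneg
          (Finset.prod_nonneg fun i _ => hp0 _) (hF _).1
      · calc A x ≤ ∑ c' : Fin m → S, (∏ i, p (c' i)) * 1 :=
              Finset.sum_le_sum fun c' _ => mul_le_mul_of_nonneg_left (hF _).2
                (Finset.prod_nonneg fun i _ => hp0 _)
          _ = 1 := by simp [sum_prod_pi p hp1 m]
    have hAB : ∀ x, |A x - B x| ≤ δ * d * m := by
      intro x
      refine ih (fun c' => F (Fin.cons x c')) (fun c' => hF _) ?_
      intro c' k y y' hy hy'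
      simp only [Fin.cons_update]
      exact hFloc _ _ _ _ hy hy'
    have hAconst : ∀ x x', x ∉ T → x' ∉ T → A x = A x' := by
      intro x x' hx hx'
      refine Finset.sum_congr rfl fun c' _ => ?_
      have h1 : Function.update (Fin.cons x c' : Fin (m+1) → S) (0 : Fin (m+1)) x
          = Fin.cons x c' := by simp
      have h2 : Function.update (Fin.cons x c' : Fin (m+1) → S) (0 : Fin (m+1)) x'
          = Fin.cons x' c' := by
        ext j
        cases j using Fin.cases with
        | zero => simp
        | succ j => simp [Function.update_of_ne (Fin.succ_ne_zero j)]
      rw [← h1, ← h2, hFloc _ _ _ _ hx hx']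
    -- decomposition
    have hdec : (∑ x, p x * A x) - (∑ x, q x * B x)
        = (∑ x, q x * (A x - B x)) + ∑ x, (p x - q x) * A x := by
      rw [← Finset.sum_sub_distrib, ← Finset.sum_add_distrib]
      exact Finset.sum_congr rfl fun x _ => by ring
    have h1 : |∑ x, q x * (A x - B x)| ≤ δ * d * m := by
      calc |∑ x, q x * (A x - B x)| ≤ ∑ x, |q x * (A x - B x)| := Finset.abs_sum_le_sum_abs _ _
        _ ≤ ∑ x, q x * (δ * d * m) := by
            refine Finset.sum_le_sum fun x _ => ?_
            rw [abs_mul, abs_of_nonneg (hq0 x)]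
            exact mul_le_mul_of_nonneg_left (hAB x) (hq0 x)
        _ = δ * d * m := by rw [← Finset.sum_mul, hq1, one_mul]
    have h2 : |∑ x, (p x - q x) * A x| ≤ δ * d := by
      by_cases hne : ∃ x0 : S, x0 ∉ T
      · obtain ⟨x0, hx0⟩ := hne
        have hzero : ∑ x, (p x - q x) * A x0 = 0 := by
          rw [← Finset.sum_mul, Finset.sum_sub_distrib, hp1, hq1, sub_self, zero_mul]
        have : ∑ x, (p x - q x) * A x = ∑ x, (p x - q x) * (A x - A x0) := by
          rw [← sub_zero (∑ x, (p x - q x) * A x), ← hzero, ← Finset.sum_sub_distrib]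
          exact Finset.sum_congr rfl fun x _ => by ring
        rw [this]
        calc |∑ x, (p x - q x) * (A x - A x0)|
            ≤ ∑ x, |(p x - q x) * (A x - A x0)| := Finset.abs_sum_le_sum_abs _ _
          _ = ∑ x ∈ T, |(p x - q x) * (A x - A x0)| := by
              rw [← Finset.sum_add_sum_compl T]
              have : ∑ x ∈ Tᶜ, |(p x - q x) * (A x - A x0)| = 0 := by
                refine Finset.sum_eq_zero fun x hx => ?_
                rw [hAconst x x0 (Finset.mem_compl.mp hx) hx0]
                simp
              rw [this, add_zero]
          _ ≤ ∑ _x ∈ T, δ := by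
              refine Finset.sum_le_sum fun x _ => ?_
              rw [abs_mul]
              calc |p x - q x| * |A x - A x0| ≤ δ * 1 := by
                    refine mul_le_mul (hpq x) ?_ (abs_nonneg _) hδ
                    rw [abs_le]
                    constructor <;> nlinarith [(hA01 x).1, (hA01 x).2, (hA01 x0).1, (hA01 x0).2]
                _ = δ := mul_one δ
          _ = δ * T.card := by rw [Finset.sum_const, nsmul_eq_mul, mul_comm]
          _ ≤ δ * d := by
              exact mul_le_mul_of_nonneg_left (by exact_mod_cast hT) hδ
      · push_neg at hne
        have hTu : T = Finset.univ := Finset.eq_univ_iff_forall.mpr hne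
        calc |∑ x, (p x - q x) * A x| ≤ ∑ x, |(p x - q x) * A x| := Finset.abs_sum_le_sum_abs _ _
          _ ≤ ∑ _x : S, δ := by
              refine Finset.sum_le_sum fun x _ => ?_
              rw [abs_mul]
              calc |p x - q x| * |A x| ≤ δ * 1 := by
                    refine mul_le_mul (hpq x) ?_ (abs_nonneg _) hδ
                    rw [abs_le]
                    constructor <;> nlinarith [(hA01 x).1, (hA01 x).2]
                _ = δ := mul_one δ
          _ = δ * (Finset.univ : Finset S).card := by rw [Finset.sum_const, nsmul_eq_mul, mul_comm]
          _ ≤ δ * d := by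
              refine mul_le_mul_of_nonneg_left ?_ hδ
              exact_mod_cast hTu ▸ hT
    rw [hsplitp, hsplitq, hdec]
    calc |(∑ x, q x * (A x - B x)) + ∑ x, (p x - q x) * A x|
        ≤ |∑ x, q x * (A x - B x)| + |∑ x, (p x - q x) * A x| := abs_add_le _ _
      _ ≤ δ * d * m + δ * d := add_le_add h1 h2
      _ = δ * d * (m + 1 : ℕ) := by push_cast; ring

theorem symAGG_expected_utility_lipschitz' {S : Type} [Fintype S] [DecidableEq S]
    (n d : ℕ) (ν : S → Finset S) (u : S → (S → ℕ) → ℝ) (δ : ℝ)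
    (hdeg : ∀ s, (ν s).card ≤ d)
    (hloc : ∀ s (D D' : S → ℕ), (∀ t ∈ ν s, D t = D' t) → u s D = u s D')
    (hu : ∀ s D, u s D ∈ Set.Icc (0:ℝ) 1)
    (p q : S → ℝ)
    (hp0 : ∀ s, 0 ≤ p s) (hp1 : ∑ s, p s = 1)
    (hq0 : ∀ s, 0 ≤ q s) (hq1 : ∑ s, q s = 1)
    (hpq : ∀ s, |p s - q s| ≤ δ) :
    ∀ s : S, |(∑ c : Fin (n-1) → S, (∏ i, p (c i)) *
        u s (fun t => (Finset.univ.filter fun i => c i = t).card + if t = s then 1 else 0)) -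
      ∑ c : Fin (n-1) → S, (∏ i, q (c i)) *
        u s (fun t => (Finset.univ.filter fun i => c i = t).card + if t = s then 1 else 0)|
      ≤ δ * d * n := by
  intro s
  have hδ : 0 ≤ δ := le_trans (abs_nonneg _) (hpq s)
  have hkey := key d (ν s) δ hδ (hdeg s) p q hp0 hp1 hq0 hq1 hpq (n-1)
    (fun c => u s (fun t => (Finset.univ.filter fun i => c i = t).card + if t = s then 1 else 0))
    (fun c => hu s _) ?_
  · refine hkey.trans ?_
    refine mul_le_mul_of_nonneg_left ?_ (mul_nonneg hδ (Nat.cast_nonneg d))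
    exact_mod_cast Nat.sub_le n 1
  · intro c k x x' hx hx'
    refine hloc s _ _ fun t ht => ?_
    have hfe : (Finset.univ.filter fun i => Function.update c k x i = t)
        = Finset.univ.filter fun i => Function.update c k x' i = t := by
      refine Finset.filter_congr fun i _ => ?_
      rcases eq_or_ne i k with rfl | h
      · simp only [Function.update_self]
        exact iff_of_false (fun h' => hx (h' ▸ ht)) (fun h' => hx' (h' ▸ ht))
      · simp [Function.update_of_ne h]
    rw [hfe]


/-- In a symmetric `n`-player action-graph game on strategy set `S` with utility
functions `u` (where `u s D` is the payoff for playing `s` under the configuration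
`D : S → ℕ` counting how many players chose each strategy), `symAGGUtil n u s p`
is the expected utility of playing strategy `s` when the other `n − 1` players
choose strategies i.i.d. according to the distribution `p` (and the player
herself plays `s`, contributing `1` to the count of `s`). -/
noncomputable def symAGGUtil (n : ℕ) {S : Type} [Fintype S] [DecidableEq S]
    (u : S → (S → ℕ) → ℝ) (s : S) (p : S → ℝ) : ℝ :=
  ∑ c : Fin (n - 1) → S, (∏ i, p (c i)) *
    u s (fun t => (Finset.univ.filter fun i => c i = t).card + if t = s then 1 else 0)

/-- Lipschitz continuity of expected utilities in symmetric AGGs: if every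
strategy's in-neighborhood has size at most `d`, utilities lie in `[0,1]` and
depend only on the counts on the in-neighborhood, and `p`, `q` are distributions
with `|p(s) − q(s)| ≤ δ` for every `s`, then the expected utilities of any
strategy under `p` and under `q` differ by at most `δ·d·n`. -/
theorem symAGG_expected_utility_lipschitz {S : Type} [Fintype S] [DecidableEq S]
    (n d : ℕ) (ν : S → Finset S) (u : S → (S → ℕ) → ℝ) (δ : ℝ)
    (hdeg : ∀ s, (ν s).card ≤ d)
    -- the utility of playing `s` depends only on the configuration restricted
    -- to the in-neighborhood `ν s` of `s`
    (hloc : ∀ s (D D' : S → ℕ), (∀ t ∈ ν s, D t = D' t) → u s D = u s D')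
    (hu : ∀ s D, u s D ∈ Set.Icc (0:ℝ) 1)
    (p q : S → ℝ)
    (hp0 : ∀ s, 0 ≤ p s) (hp1 : ∑ s, p s = 1)
    (hq0 : ∀ s, 0 ≤ q s) (hq1 : ∑ s, q s = 1)
    (hpq : ∀ s, |p s - q s| ≤ δ) :
    ∀ s : S, |symAGGUtil n u s p - symAGGUtil n u s q| ≤ δ * d * n := by
  intro s
  unfold symAGGUtil
  exact symAGG_expected_utility_lipschitz' n d ν u δ hdeg hloc hu p q hp0 hp1 hq0 hq1 hpq s
end

section
/- Fix a real number q ∈ [0,1] and a real number ε with 0 < ε < 1/3. Consider the two-player game (the copy gadget) between players a and c, each with strategy set {f, t}, where: player a's payoff is q when she plays f, and equals 1 if c plays f and 0 if c plays t when she plays t; player c's payoff is 1 − 2·(indicator that a plays t) when she plays f, and 0 when she plays t. Let (α, γ) be mixed strategies for a and c, where α is the probability a plays f and γ the probability c plays f, forming an ε²-Nash equilibrium (neither player can increase her expected payoff by more than ε² by unilaterally changing her mixed strategy). Then |γ − q| ≤ ε. -/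
/-- The copy gadget: in the two-player game where player `a` gets payoff `q` for
playing `f` and payoff `1` (resp. `0`) for playing `t` when `c` plays `f` (resp. `t`),
and player `c` gets payoff `1 − 2·[a plays t]` for playing `f` and `0` for playing `t`,
any ε²-Nash equilibrium `(α, γ)` (in mixed strategies, `α` = probability `a` plays `f`,
`γ` = probability `c` plays `f`) satisfies `|γ − q| ≤ ε`, provided `0 < ε < 1/3`. -/
theorem copy_gadget (q ε α γ : ℝ)
    (hq : q ∈ Set.Icc (0:ℝ) 1)
    (hε0 : 0 < ε) (hε1 : ε < 1/3)
    (hα : α ∈ Set.Icc (0:ℝ) 1) (hγ : γ ∈ Set.Icc (0:ℝ) 1)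
    -- player a cannot gain more than ε² by deviating to any mixed strategy α'
    (heqA : ∀ α' ∈ Set.Icc (0:ℝ) 1,
      α' * q + (1 - α') * γ ≤ (α * q + (1 - α) * γ) + ε ^ 2)
    -- player c cannot gain more than ε² by deviating to any mixed strategy γ'
    (heqC : ∀ γ' ∈ Set.Icc (0:ℝ) 1,
      γ' * (1 - 2 * (1 - α)) ≤ γ * (1 - 2 * (1 - α)) + ε ^ 2) :
    |γ - q| ≤ ε := by
  obtain ⟨hq0, hq1⟩ := hq
  obtain ⟨hα0, hα1⟩ := hα
  obtain ⟨hγ0, hγ1⟩ := hγ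
  by_contra h
  push_neg at h
  rcases lt_abs.mp h with h' | h'
  · -- γ - q > ε
    have hA := heqA 0 ⟨le_refl 0, by linarith⟩
    have hC := heqC 0 ⟨le_refl 0, by linarith⟩
    have hαε : α * (γ - q) ≤ ε ^ 2 := by nlinarith
    have hαlt : α < ε := by nlinarith
    nlinarith [mul_pos hε0 hε0, mul_nonneg hγ0 (le_of_lt hε0)]
  · -- q - γ > ε
    rw [neg_sub] at h'
    have hA := heqA 1 ⟨by norm_num, le_refl 1⟩
    have hC := heqC 1 ⟨by norm_num, le_refl 1⟩
    have h1α : (1 - α) * (q - γ) ≤ ε ^ 2 := by nlinarith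
    have hαgt : 1 - α < ε := by nlinarith
    nlinarith [mul_pos hε0 hε0]
end
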